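/- Let E be a real inner product space, let f_1,…,f_n : E → ℝ be differentiable with P(w) = (1/n) ∑_{i=1}^n f_i(w), and let {1,…,n} be partitioned into p disjoint blocks D_1,…,D_p each of size q (n = pq), with local objectives F_k(w) = (1/q) ∑_{i∈D_k} f_i(w). Assume: each ∇f_i is L-Lipschitz; each F_k is μ-strongly convex (so F_k(a) ≥ F_k(b) + ⟪∇F_k(b), a−b⟫ + (μ/2)‖a−b‖²) with μ > 0; w* minimizes P (so P(w) ≥ P(w*) for all w and ∇P(w*) = 0); c > L − μ with c > 0; and 0 < η ≤ (μ + c − L)/(3(L² + c²)). Let w_t ∈ E, z = ∇P(w_t), and for u ∈ E and i ∈ D_k define v_{k,i}(u) = ∇f_i(u) − ∇f_i(w_t) + z + c(u − w_t). Then for any points u_1,…,u_p ∈ E: (1/p) ∑_{k=1}^p (1/q) ∑_{i∈D_k} ‖u_k − η·v_{k,i}(u_k) − w*‖² ≤ (1 − η(2μ + c)) · (1/p) ∑_{k=1}^p ‖u_k − w*‖² + (cη + 3L²η²) · ‖w_t − w*‖². -/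

import Mathlib

/-!
Write `a = u_k - w*`, `e = u_k - w_t`, `d = w_t - w*`. Averaging the squared distance over
`D_k` gives `‖a‖² - 2η⟪V_k, a⟫ + η² M_k`, where `V_k = ∇F_k(u_k) - ∇F_k(w_t) + z + c e` is the mean
step and `M_k ≤ 3(L² + c²)‖e‖² + 3L²‖d‖²` its second moment; the step-size condition absorbs the
`η²‖e‖²` term. The inner product `⟪V_k, a⟫` is bounded below by strong convexity of `F_k` at `u_k`
and at `w_t`, together with `P(w*) + μ/2 ‖a‖² ≤ P(w_t) + ⟪z, e⟫ + L/2 ‖e‖²` (strong convexity of `P`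
at its critical point against the descent lemma at `w_t`). What is left is the residual
`2(P - F_k)(w_t) - 2(P - F_k)(w*) - 2⟪z - ∇F_k(w_t), d⟫`, which sums to zero over the blocks
because the `F_k` average to `P`.
-/

open scoped InnerProductSpace
open Finset

section

variable {E : Type*} [NormedAddCommGroup E] [InnerProductSpace ℝ E]

theorem sum_norm_sub_smul_sq {ι : Type*} (s : Finset ι) (a : E) (η : ℝ) (v : ι → E) :
    ∑ i ∈ s, ‖a - η • v i‖ ^ 2
      = s.card * ‖a‖ ^ 2 - 2 * η * ⟪∑ i ∈ s, v i, a⟫_ℝ + η ^ 2 * ∑ i ∈ s, ‖v i‖ ^ 2 := by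
  simp only [norm_sub_sq_real, real_inner_smul_right, norm_smul, mul_pow, Real.norm_eq_abs,
    sq_abs, sum_add_distrib, sum_sub_distrib, sum_const, nsmul_eq_mul, ← mul_sum, inner_sum,
    real_inner_comm a]
  ring

theorem norm_smul_sum_sub_smul_sum_le {ι : Type*} {s : Finset ι} {m : ℕ} (hs : s.card = m)
    (hm : 0 < m) {v w : ι → E} {C : ℝ} (h : ∀ i ∈ s, ‖v i - w i‖ ≤ C) :
    ‖(1 / m : ℝ) • ∑ i ∈ s, v i - (1 / m : ℝ) • ∑ i ∈ s, w i‖ ≤ C := by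
  have hm' : (0 : ℝ) < m := by exact_mod_cast hm
  have hsum : ‖∑ i ∈ s, (v i - w i)‖ ≤ m * C := by
    simpa [hs] using norm_sum_le_of_le s h
  rw [← smul_sub, ← sum_sub_distrib, norm_smul, Real.norm_of_nonneg (by positivity)]
  calc 1 / (m : ℝ) * ‖∑ i ∈ s, (v i - w i)‖ ≤ 1 / m * (m * C) := by gcongr
    _ = C := by field_simp

theorem mean_le_of_le_add_residual {ι : Type*} {s : Finset ι} {m : ℕ} (hs : s.card = m)
    (hm : 0 < m) {x y r : ι → ℝ} {A B : ℝ} (h : ∀ k ∈ s, x k ≤ A * y k + B + r k)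
    (hr : ∑ k ∈ s, r k = 0) :
    (1 / m : ℝ) * ∑ k ∈ s, x k ≤ A * ((1 / m : ℝ) * ∑ k ∈ s, y k) + B := by
  have hm' : (0 : ℝ) < m := by exact_mod_cast hm
  calc (1 / m : ℝ) * ∑ k ∈ s, x k ≤ (1 / m : ℝ) * ∑ k ∈ s, (A * y k + B + r k) := by
        gcongr with k hk
        exact h k hk
    _ = A * ((1 / m : ℝ) * ∑ k ∈ s, y k) + B := by
        rw [sum_add_distrib, sum_add_distrib, hr, ← mul_sum, sum_const, hs, nsmul_eq_mul]
        field_simp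
        ring

section Partition

variable {n p q : ℕ} {D : Fin p → Finset (Fin n)}

theorem sum_eq_sum_sum_of_partition (hdisj : ∀ k l, k ≠ l → Disjoint (D k) (D l))
    (hcover : ∀ i, ∃ k, i ∈ D k) {M : Type*} [AddCommMonoid M] (v : Fin n → M) :
    ∑ i, v i = ∑ k, ∑ i ∈ D k, v i := by
  have huniv : (univ : Finset (Fin n)) = univ.biUnion D := by
    ext i
    simpa using hcover i
  rw [huniv, sum_biUnion fun k _ l _ hkl => hdisj k l hkl]

theorem sum_smul_sum_of_partition (hn : n = p * q) (hp : 0 < p)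
    (hdisj : ∀ k l, k ≠ l → Disjoint (D k) (D l)) (hcover : ∀ i, ∃ k, i ∈ D k)
    {M : Type*} [AddCommGroup M] [Module ℝ M] (v : Fin n → M) :
    ∑ k, (1 / q : ℝ) • ∑ i ∈ D k, v i = (p : ℝ) • (1 / n : ℝ) • ∑ i, v i := by
  have hp' : (p : ℝ) ≠ 0 := by positivity
  have hn' : (n : ℝ) = p * q := by exact_mod_cast hn
  rw [← smul_sum, sum_eq_sum_sum_of_partition hdisj hcover, smul_smul, hn']
  congr 1
  field_simp

end Partition

variable [CompleteSpace E]

theorem gradient_const_mul_sum {ι : Type*} (s : Finset ι) {g : ι → E → ℝ}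
    (hg : ∀ i, Differentiable ℝ (g i)) (a : ℝ) (x : E) :
    gradient (fun w => a * ∑ i ∈ s, g i w) x = a • ∑ i ∈ s, gradient (g i) x := by
  have hsum : DifferentiableAt ℝ (fun w => ∑ i ∈ s, g i w) x :=
    DifferentiableAt.fun_sum fun i _ => hg i x
  simp only [gradient, fderiv_const_mul hsum, fderiv_fun_sum fun i _ => hg i x, map_smul, map_sum]

theorem hasDerivAt_comp_add_smul {φ : E → ℝ} (hφ : Differentiable ℝ φ) (x v : E) (t : ℝ) :
    HasDerivAt (fun t : ℝ => φ (x + t • v)) ⟪gradient φ (x + t • v), v⟫_ℝ t := by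
  have hline : HasDerivAt (fun t : ℝ => x + t • v) v t := by
    simpa using ((hasDerivAt_id t).smul_const v).const_add x
  rw [inner_gradient_left]
  exact (hφ _).hasFDerivAt.comp_hasDerivAt t hline

theorem le_add_inner_gradient_add_sq_of_lipschitz {φ : E → ℝ} (hφ : Differentiable ℝ φ) {L : ℝ}
    (hlip : ∀ a b : E, ‖gradient φ a - gradient φ b‖ ≤ L * ‖a - b‖) (x y : E) :
    φ y ≤ φ x + ⟪gradient φ x, y - x⟫_ℝ + L / 2 * ‖y - x‖ ^ 2 := by
  set v := y - x
  have hbound : ∀ t : ℝ, HasDerivAt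
      (fun t => φ x + t * ⟪gradient φ x, v⟫_ℝ + L / 2 * t ^ 2 * ‖v‖ ^ 2)
      (⟪gradient φ x, v⟫_ℝ + L * t * ‖v‖ ^ 2) t := by
    intro t
    have h := (((hasDerivAt_id t).mul_const ⟪gradient φ x, v⟫_ℝ).const_add (φ x)).add
      (((hasDerivAt_pow 2 t).const_mul (L / 2)).mul_const (‖v‖ ^ 2))
    exact h.congr_deriv (by push_cast; ring)
  have hslope : ∀ t, 0 ≤ t →
      ⟪gradient φ (x + t • v), v⟫_ℝ ≤ ⟪gradient φ x, v⟫_ℝ + L * t * ‖v‖ ^ 2 := by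
    intro t ht
    have := (real_inner_le_norm _ _).trans
      (mul_le_mul_of_nonneg_right (hlip (x + t • v) x) (norm_nonneg v))
    rw [inner_sub_left, add_sub_cancel_left, norm_smul, Real.norm_of_nonneg ht] at this
    linarith
  have key := image_le_of_deriv_right_le_deriv_boundary (a := 0) (b := 1)
    (fun t _ => (hasDerivAt_comp_add_smul hφ x v t).continuousAt.continuousWithinAt)
    (fun t _ => (hasDerivAt_comp_add_smul hφ x v t).hasDerivWithinAt)
    (by simp) (fun t _ => (hbound t).continuousAt.continuousWithinAt)
    (fun t _ => (hbound t).hasDerivWithinAt) (fun t ht => hslope t ht.1)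
    (Set.right_mem_Icc.2 zero_le_one)
  simpa [v] using key

theorem le_inner_gradient_sub_inner_gradient {F : E → ℝ} {μ : ℝ}
    (hsc : ∀ a b : E, F a ≥ F b + ⟪gradient F b, a - b⟫_ℝ + (μ / 2) * ‖a - b‖ ^ 2) (u x y : E) :
    F y - F x + μ / 2 * (‖u - x‖ ^ 2 + ‖u - y‖ ^ 2)
      ≤ ⟪gradient F u, u - x⟫_ℝ - ⟪gradient F y, u - y⟫_ℝ := by
  have hx := hsc x u
  have hu := hsc u y
  rw [← neg_sub u x, inner_neg_right, norm_neg] at hx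
  linarith

theorem add_sq_dist_le_of_sum_strongConvex {ι : Type*} {s : Finset ι} {m : ℕ}
    (hs : s.card = m) (hm : 0 < m) {F : ι → E → ℝ} {P : E → ℝ} {μ : ℝ}
    (hsc : ∀ k ∈ s, ∀ a b : E,
      F k a ≥ F k b + ⟪gradient (F k) b, a - b⟫_ℝ + (μ / 2) * ‖a - b‖ ^ 2)
    (hsumF : ∀ x, ∑ k ∈ s, F k x = m * P x)
    {wstar : E} (hstar : ∑ k ∈ s, gradient (F k) wstar = 0) (a : E) :
    P wstar + μ / 2 * ‖a - wstar‖ ^ 2 ≤ P a := by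
  have hsum := sum_le_sum fun k hk => hsc k hk a wstar
  simp only [sum_add_distrib, ← sum_inner, hsumF, hstar, inner_zero_left, sum_const, hs,
    nsmul_eq_mul] at hsum
  nlinarith [(Nat.cast_pos.2 hm : (0 : ℝ) < m)]

theorem norm_sq_scope_direction_le {g : E → ℝ} {L c : ℝ}
    (hL : ∀ a b : E, ‖gradient g a - gradient g b‖ ≤ L * ‖a - b‖) {u wt wstar z : E}
    (hz : ‖z‖ ≤ L * ‖wt - wstar‖) :
    ‖gradient g u - gradient g wt + z + c • (u - wt)‖ ^ 2
      ≤ 3 * (L ^ 2 + c ^ 2) * ‖u - wt‖ ^ 2 + 3 * L ^ 2 * ‖wt - wstar‖ ^ 2 := by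
  have hgrad := hL u wt
  have htri : ‖gradient g u - gradient g wt + z + c • (u - wt)‖
      ≤ L * ‖u - wt‖ + L * ‖wt - wstar‖ + |c| * ‖u - wt‖ := by
    refine norm_add₃_le.trans ?_
    rw [norm_smul, Real.norm_eq_abs]
    linarith
  have hnorm := (norm_nonneg _).trans htri
  calc ‖gradient g u - gradient g wt + z + c • (u - wt)‖ ^ 2
      ≤ (L * ‖u - wt‖ + L * ‖wt - wstar‖ + |c| * ‖u - wt‖) ^ 2 := by gcongr
    _ ≤ 3 * (L ^ 2 + c ^ 2) * ‖u - wt‖ ^ 2 + 3 * L ^ 2 * ‖wt - wstar‖ ^ 2 := by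
      nlinarith [sq_abs c, sq_nonneg (L * ‖u - wt‖ - L * ‖wt - wstar‖),
        sq_nonneg (L * ‖u - wt‖ - |c| * ‖u - wt‖), sq_nonneg (L * ‖wt - wstar‖ - |c| * ‖u - wt‖)]

theorem le_two_inner_scope_direction {F P : E → ℝ} {L μ c : ℝ}
    (hsc : ∀ a b : E, F a ≥ F b + ⟪gradient F b, a - b⟫_ℝ + (μ / 2) * ‖a - b‖ ^ 2)
    {u wt wstar z : E}
    (hP : P wstar + μ / 2 * ‖u - wstar‖ ^ 2 ≤ P wt + ⟪z, u - wt⟫_ℝ + L / 2 * ‖u - wt‖ ^ 2) :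
    (2 * μ + c) * ‖u - wstar‖ ^ 2 + (c + μ - L) * ‖u - wt‖ ^ 2 - c * ‖wt - wstar‖ ^ 2
      - (2 * (P wt - P wstar) - 2 * (F wt - F wstar) - 2 * ⟪z - gradient F wt, wt - wstar⟫_ℝ)
      ≤ 2 * ⟪gradient F u - gradient F wt + z + c • (u - wt), u - wstar⟫_ℝ := by
  have hF := le_inner_gradient_sub_inner_gradient hsc u wstar wt
  have hsplit : u - wstar = (u - wt) + (wt - wstar) := by abel
  rw [hsplit] at hF hP ⊢
  generalize u - wt = e at hF hP ⊢
  generalize wt - wstar = d at hF hP ⊢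
  simp only [norm_add_sq_real, inner_add_left, inner_add_right, inner_sub_left,
    real_inner_smul_left, real_inner_self_eq_norm_sq] at hF hP ⊢
  linarith

theorem block_mean_sq_dist_le {ι : Type*} {s : Finset ι} {q : ℕ} (hs : s.card = q) (hq : 0 < q)
    {g : ι → E → ℝ} (hg : ∀ i, Differentiable ℝ (g i)) {F P : E → ℝ}
    (hF : F = fun w => (1 / q : ℝ) * ∑ i ∈ s, g i w) {L μ c η : ℝ}
    (hL : ∀ i, ∀ a b : E, ‖gradient (g i) a - gradient (g i) b‖ ≤ L * ‖a - b‖)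
    (hsc : ∀ a b : E, F a ≥ F b + ⟪gradient F b, a - b⟫_ℝ + (μ / 2) * ‖a - b‖ ^ 2)
    (hc0 : 0 < c) (hη0 : 0 ≤ η) (hη : η ≤ (μ + c - L) / (3 * (L ^ 2 + c ^ 2)))
    {u wt wstar z : E} (hz : ‖z‖ ≤ L * ‖wt - wstar‖)
    (hP : P wstar + μ / 2 * ‖u - wstar‖ ^ 2 ≤ P wt + ⟪z, u - wt⟫_ℝ + L / 2 * ‖u - wt‖ ^ 2) :
    (1 / q : ℝ) * ∑ i ∈ s,
        ‖u - η • (gradient (g i) u - gradient (g i) wt + z + c • (u - wt)) - wstar‖ ^ 2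
      ≤ (1 - η * (2 * μ + c)) * ‖u - wstar‖ ^ 2 + (c * η + 3 * L ^ 2 * η ^ 2) * ‖wt - wstar‖ ^ 2
        + η * (2 * (P wt - P wstar) - 2 * (F wt - F wstar)
          - 2 * ⟪z - gradient F wt, wt - wstar⟫_ℝ) := by
  have hq' : (0 : ℝ) < q := by exact_mod_cast hq
  set v : ι → E := fun i => gradient (g i) u - gradient (g i) wt + z + c • (u - wt)
  have hgradF : ∀ x, gradient F x = (1 / q : ℝ) • ∑ i ∈ s, gradient (g i) x := fun x => by
    rw [hF]
    exact gradient_const_mul_sum s hg _ x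
  have hmean : (1 / q : ℝ) • ∑ i ∈ s, v i
      = gradient F u - gradient F wt + z + c • (u - wt) := by
    simp only [v, sum_add_distrib, sum_sub_distrib, sum_const, hs, smul_add, smul_sub, hgradF,
      ← Nat.cast_smul_eq_nsmul ℝ, smul_smul, ← mul_assoc, one_div_mul_cancel hq'.ne', one_mul,
      one_smul]
  have hexpand : (1 / q : ℝ) * ∑ i ∈ s, ‖u - η • v i - wstar‖ ^ 2
      = ‖u - wstar‖ ^ 2 - η * (2 * ⟪(1 / q : ℝ) • ∑ i ∈ s, v i, u - wstar⟫_ℝ)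
        + η ^ 2 * ((1 / q : ℝ) * ∑ i ∈ s, ‖v i‖ ^ 2) := by
    simp only [sub_right_comm u _ wstar, sum_norm_sub_smul_sq, hs, real_inner_smul_left]
    field_simp
  have hmoment : (1 / q : ℝ) * ∑ i ∈ s, ‖v i‖ ^ 2
      ≤ 3 * (L ^ 2 + c ^ 2) * ‖u - wt‖ ^ 2 + 3 * L ^ 2 * ‖wt - wstar‖ ^ 2 := by
    rw [one_div_mul_eq_div, div_le_iff₀' hq', ← hs, ← nsmul_eq_mul]
    exact sum_le_card_nsmul _ _ _ fun i _ => norm_sq_scope_direction_le (hL i) hz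
  have hinner := le_two_inner_scope_direction (c := c) hsc hP
  have hstep : η * (3 * (L ^ 2 + c ^ 2)) ≤ μ + c - L := by
    rwa [le_div_iff₀ (by positivity)] at hη
  rw [hexpand, hmean]
  nlinarith [mul_le_mul_of_nonneg_left hinner hη0, mul_le_mul_of_nonneg_left hmoment (sq_nonneg η),
    mul_le_mul_of_nonneg_right (mul_le_mul_of_nonneg_left hstep hη0) (sq_nonneg ‖u - wt‖)]

end

theorem scope_lemma1_one_step_general
    {E : Type*} [NormedAddCommGroup E] [InnerProductSpace ℝ E] [CompleteSpace E]
    (n p q : ℕ) (hn : n = p * q) (hp : 0 < p) (hq : 0 < q)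
    (f : Fin n → E → ℝ) (hf : ∀ i, Differentiable ℝ (f i))
    (D : Fin p → Finset (Fin n))
    (hdisj : ∀ k l : Fin p, k ≠ l → Disjoint (D k) (D l))
    (hcard : ∀ k, (D k).card = q)
    (hcover : ∀ i : Fin n, ∃ k, i ∈ D k)
    (P : E → ℝ) (hP : P = fun w => (1 / n : ℝ) * ∑ i, f i w)
    (F : Fin p → E → ℝ)
    (hF : ∀ k, F k = fun w => (1 / q : ℝ) * ∑ i ∈ D k, f i w)
    (L μ c η : ℝ)
    (hL : ∀ i, ∀ a b : E, ‖gradient (f i) a - gradient (f i) b‖ ≤ L * ‖a - b‖)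
    (hsc : ∀ k, ∀ a b : E,
      F k a ≥ F k b + ⟪gradient (F k) b, a - b⟫_ℝ + (μ / 2) * ‖a - b‖ ^ 2)
    (wstar : E) (hstar : gradient P wstar = 0)
    (hc0 : 0 < c)
    (hη0 : 0 < η) (hη : η ≤ (μ + c - L) / (3 * (L ^ 2 + c ^ 2)))
    (wt z : E) (hz : z = gradient P wt)
    (u : Fin p → E) :
    (1 / p : ℝ) * ∑ k, (1 / q : ℝ) * ∑ i ∈ D k,
        ‖u k - η • (gradient (f i) (u k) - gradient (f i) wt + z
            + c • (u k - wt)) - wstar‖ ^ 2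
      ≤ (1 - η * (2 * μ + c)) * ((1 / p : ℝ) * ∑ k, ‖u k - wstar‖ ^ 2)
        + (c * η + 3 * L ^ 2 * η ^ 2) * ‖wt - wstar‖ ^ 2 := by
  have hgradP : ∀ x, gradient P x = (1 / n : ℝ) • ∑ i, gradient (f i) x := fun x => by
    rw [hP]
    exact gradient_const_mul_sum univ hf _ x
  have hsumF : ∀ x, ∑ k, F k x = p * P x := fun x => by
    simpa [hF, hP] using sum_smul_sum_of_partition hn hp hdisj hcover (f · x)
  have hsumGrad : ∀ x, ∑ k, gradient (F k) x = (p : ℝ) • gradient P x := fun x => by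
    simp only [hF, gradient_const_mul_sum _ hf, hgradP]
    exact sum_smul_sum_of_partition hn hp hdisj hcover _
  have hPlip : ∀ a b : E, ‖gradient P a - gradient P b‖ ≤ L * ‖a - b‖ := fun a b => by
    simp only [hgradP]
    exact norm_smul_sum_sub_smul_sum_le (by simp) (hn ▸ Nat.mul_pos hp hq) fun i _ => hL i a b
  have hsandwich : ∀ a, P wstar + μ / 2 * ‖a - wstar‖ ^ 2
      ≤ P wt + ⟪z, a - wt⟫_ℝ + L / 2 * ‖a - wt‖ ^ 2 := fun a =>
    hz ▸ (add_sq_dist_le_of_sum_strongConvex (by simp) hp (fun k _ => hsc k) hsumF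
      (by simp [hsumGrad, hstar]) a).trans
      (le_add_inner_gradient_add_sq_of_lipschitz (by rw [hP]; fun_prop) hPlip wt a)
  have hz_le : ‖z‖ ≤ L * ‖wt - wstar‖ := by simpa [hz, hstar] using hPlip wt wstar
  have hresidual : ∑ k, η * (2 * (P wt - P wstar) - 2 * (F k wt - F k wstar)
      - 2 * ⟪z - gradient (F k) wt, wt - wstar⟫_ℝ) = 0 := by
    simp only [← mul_sum, sum_sub_distrib, ← sum_inner, hsumF, hsumGrad, ← hz, sum_const,
      card_univ, Fintype.card_fin, ← Nat.cast_smul_eq_nsmul ℝ, smul_eq_mul, sub_self,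
      inner_zero_left]
    ring
  refine mean_le_of_le_add_residual (by simp) hp (fun k _ => ?_) hresidual
  exact block_mean_sq_dist_le (hcard k) hq hf (hF k) hL (hsc k) hc0 hη0.le hη hz_le
    (hsandwich (u k))

/-- deterministic one-step form of Lemma 1 of SCOPE. -/
theorem scope_lemma1_one_step
    {E : Type*} [NormedAddCommGroup E] [InnerProductSpace ℝ E] [CompleteSpace E]
    (n p q : ℕ) (hn : n = p * q) (hp : 0 < p) (hq : 0 < q)
    (f : Fin n → E → ℝ) (hf : ∀ i, Differentiable ℝ (f i))
    (D : Fin p → Finset (Fin n))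
    (hdisj : ∀ k l : Fin p, k ≠ l → Disjoint (D k) (D l))
    (hcard : ∀ k, (D k).card = q)
    (hcover : ∀ i : Fin n, ∃ k, i ∈ D k)
    (P : E → ℝ) (hP : P = fun w => (1 / n : ℝ) * ∑ i, f i w)
    (F : Fin p → E → ℝ)
    (hF : ∀ k, F k = fun w => (1 / q : ℝ) * ∑ i ∈ D k, f i w)
    (L μ c η : ℝ)
    (hL : ∀ i, ∀ a b : E, ‖gradient (f i) a - gradient (f i) b‖ ≤ L * ‖a - b‖)
    (hμ : 0 < μ)
    (hsc : ∀ k, ∀ a b : E,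
      F k a ≥ F k b + ⟪gradient (F k) b, a - b⟫_ℝ + (μ / 2) * ‖a - b‖ ^ 2)
    (wstar : E) (hmin : ∀ w, P wstar ≤ P w) (hstar : gradient P wstar = 0)
    (hc0 : 0 < c) (hcL : c > L - μ)
    (hη0 : 0 < η) (hη : η ≤ (μ + c - L) / (3 * (L ^ 2 + c ^ 2)))
    (wt z : E) (hz : z = gradient P wt)
    (u : Fin p → E) :
    (1 / p : ℝ) * ∑ k, (1 / q : ℝ) * ∑ i ∈ D k,
        ‖u k - η • (gradient (f i) (u k) - gradient (f i) wt + z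
            + c • (u k - wt)) - wstar‖ ^ 2
      ≤ (1 - η * (2 * μ + c)) * ((1 / p : ℝ) * ∑ k, ‖u k - wstar‖ ^ 2)
        + (c * η + 3 * L ^ 2 * η ^ 2) * ‖wt - wstar‖ ^ 2 :=
  scope_lemma1_one_step_general n p q hn hp hq f hf D hdisj hcard hcover P hP F hF L μ c η hL hsc
    wstar hstar hc0 hη0 hη wt z hz u
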